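/- arXiv:2411.03208 — 4 statements merged into one kernel-verified Lean document; each statement's English description precedes it below -/
import Mathlib

section
/- Let (Y1(0), Y2(0), S1, S2, D1, D2) be random variables with finite second moments, let ΔD = D2 − D1, and define Yt = Yt(0) + St·Dt for t = 1, 2 and ΔY = Y2 − Y1. If ΔD is independent of (Y2(0) − Y1(0), S1, S2) and V(ΔD) > 0, then cov(ΔD, ΔY)/V(ΔD) = E(S2) + cov(ΔD, (S2 − S1)·D1)/V(ΔD). -/
open MeasureTheory ProbabilityTheory

noncomputable def cov {Ω : Type*} [MeasurableSpace Ω] (μ : Measure Ω) (X Y : Ω → ℝ) : ℝ :=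
  ∫ ω, (X ω - ∫ x, X x ∂μ) * (Y ω - ∫ x, Y x ∂μ) ∂μ

noncomputable def var {Ω : Type*} [MeasurableSpace Ω] (μ : Measure Ω) (X : Ω → ℝ) : ℝ :=
  cov μ X X

/-- Conditional expectation of `X` given the σ-algebra generated by `W`. -/
noncomputable def cexp {Ω E : Type*} [MeasurableSpace Ω] [MeasurableSpace E]
    (μ : Measure Ω) (W : Ω → E) (X : Ω → ℝ) : Ω → ℝ :=
  μ[X | MeasurableSpace.comap W inferInstance]

/-- Conditional variance of `X` given the σ-algebra generated by `W`. -/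
noncomputable def cvar {Ω E : Type*} [MeasurableSpace Ω] [MeasurableSpace E]
    (μ : Measure Ω) (W : Ω → E) (X : Ω → ℝ) : Ω → ℝ :=
  cexp μ W (fun ω => (X ω - cexp μ W X ω) ^ 2)

lemma myL2mul {Ω : Type*} [MeasurableSpace Ω] {μ : Measure Ω} {f g : Ω → ℝ}
    (hf : MemLp f 2 μ) (hg : MemLp g 2 μ) :
    Integrable (fun ω => f ω * g ω) μ := by
  have h : MemLp (f • g) 1 μ := hg.smul hf
  exact (memLp_one_iff_integrable.mp h)

lemma mycov_eq {Ω : Type*} [MeasurableSpace Ω] (μ : Measure Ω) [IsProbabilityMeasure μ]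
    {X Y : Ω → ℝ} (hX : Integrable X μ) (hY : Integrable Y μ)
    (hXY : Integrable (fun ω => X ω * Y ω) μ) :
    cov μ X Y = (∫ ω, X ω * Y ω ∂μ) - (∫ ω, X ω ∂μ) * (∫ ω, Y ω ∂μ) := by
  unfold cov
  set a := ∫ x, X x ∂μ with ha
  set b := ∫ x, Y x ∂μ with hb
  have h : ∀ ω, (X ω - a) * (Y ω - b) = (X ω * Y ω - a * Y ω) - (b * X ω - a * b) := by
    intro ω; ring
  simp only [h]
  have h1 : Integrable (fun ω => X ω * Y ω - a * Y ω) μ := hXY.sub (hY.const_mul a)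
  have h2 : Integrable (fun ω => b * X ω - a * b) μ := (hX.const_mul b).sub (integrable_const _)
  have h3 : Integrable (fun ω => a * Y ω) μ := hY.const_mul a
  have h4 : Integrable (fun ω => b * X ω) μ := hX.const_mul b
  rw [integral_sub h1 h2, integral_sub hXY h3, integral_sub h4 (integrable_const _),
    integral_const_mul, integral_const_mul, integral_const]
  simp only [measure_univ, probReal_univ, ENNReal.toReal_one, smul_eq_mul, one_mul, ← ha, ← hb]
  ring

/-- Theorem (OVB formula): under random assignment of the first-differenced treatment,
`β = E(S2) + cov(ΔD, ΔS·D1)/V(ΔD)`. -/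
theorem stmt0 {Ω : Type*} [MeasurableSpace Ω] (μ : Measure Ω) [IsProbabilityMeasure μ]
    (Y10 Y20 S1 S2 D1 D2 : Ω → ℝ)
    (hY10 : MemLp Y10 2 μ) (hY20 : MemLp Y20 2 μ) (hS1 : MemLp S1 2 μ)
    (hS2 : MemLp S2 2 μ) (hD1 : MemLp D1 2 μ) (hD2 : MemLp D2 2 μ)
    (hind : IndepFun (fun ω => D2 ω - D1 ω)
      (fun ω => (Y20 ω - Y10 ω, S1 ω, S2 ω)) μ)
    (hvar : 0 < var μ (fun ω => D2 ω - D1 ω)) :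
    cov μ (fun ω => D2 ω - D1 ω)
        (fun ω => (Y20 ω + S2 ω * D2 ω) - (Y10 ω + S1 ω * D1 ω)) /
      var μ (fun ω => D2 ω - D1 ω)
    = (∫ ω, S2 ω ∂μ)
      + cov μ (fun ω => D2 ω - D1 ω) (fun ω => (S2 ω - S1 ω) * D1 ω) /
        var μ (fun ω => D2 ω - D1 ω) := by
  set X : Ω → ℝ := fun ω => D2 ω - D1 ω with hXdef
  set A : Ω → ℝ := fun ω => Y20 ω - Y10 ω with hAdef
  set G : Ω → ℝ := fun ω => (S2 ω - S1 ω) * D1 ω with hGdef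
  have hX2 : MemLp X 2 μ := hD2.sub hD1
  have hA2 : MemLp A 2 μ := hY20.sub hY10
  have hDS2 : MemLp (fun ω => S2 ω - S1 ω) 2 μ := hS2.sub hS1
  -- derived independences
  have hiA : IndepFun X A μ :=
    hind.comp measurable_id measurable_fst
  have hiS2 : IndepFun X S2 μ :=
    hind.comp measurable_id (measurable_snd.comp measurable_snd)
  have hiDS : IndepFun X (fun ω => S2 ω - S1 ω) μ :=
    hind.comp measurable_id ((measurable_snd.comp measurable_snd).sub
      (measurable_fst.comp measurable_snd))
  -- basic integrabilities
  have iX : Integrable X μ := hX2.integrable one_le_two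
  have iA : Integrable A μ := hA2.integrable one_le_two
  have iS2 : Integrable S2 μ := hS2.integrable one_le_two
  have iXsq : Integrable (fun ω => X ω ^ 2) μ := hX2.integrable_sq
  have iG : Integrable G μ := myL2mul hDS2 hD1
  have iXA : Integrable (fun ω => X ω * A ω) μ := myL2mul hX2 hA2
  have iXX : Integrable (fun ω => X ω * X ω) μ := myL2mul hX2 hX2
  -- X * ΔS is in L2 by independence
  have hXDS2 : MemLp (fun ω => X ω * (S2 ω - S1 ω)) 2 μ := by
    have hasm : AEStronglyMeasurable (fun ω => X ω * (S2 ω - S1 ω)) μ :=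
      hX2.aestronglyMeasurable.mul hDS2.aestronglyMeasurable
    rw [memLp_two_iff_integrable_sq hasm]
    have hisq : IndepFun (fun ω => X ω ^ 2) (fun ω => (S2 ω - S1 ω) ^ 2) μ :=
      hiDS.comp (measurable_id.pow_const 2) (measurable_id.pow_const 2)
    have him : Integrable (fun ω => X ω ^ 2 * (S2 ω - S1 ω) ^ 2) μ :=
      hisq.integrable_mul hX2.integrable_sq hDS2.integrable_sq
    refine him.congr (Filter.Eventually.of_forall fun ω => ?_)
    ring
  have iXG : Integrable (fun ω => X ω * G ω) μ := by
    have h := myL2mul hXDS2 hD1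
    refine h.congr (Filter.Eventually.of_forall fun ω => ?_)
    simp only [hGdef]; ring
  have iS2Xsq : Integrable (fun ω => S2 ω * X ω ^ 2) μ := by
    have h : IndepFun (fun ω => X ω ^ 2) S2 μ :=
      hiS2.comp (measurable_id.pow_const 2) measurable_id
    have him : Integrable (fun ω => X ω ^ 2 * S2 ω) μ := h.integrable_mul iXsq iS2
    refine him.congr (Filter.Eventually.of_forall fun ω => ?_)
    ring
  have iS2X : Integrable (fun ω => S2 ω * X ω) μ := myL2mul hS2 hX2
  -- ΔY decomposition
  have hDYeq : ∀ ω, (Y20 ω + S2 ω * D2 ω) - (Y10 ω + S1 ω * D1 ω)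
      = A ω + (S2 ω * X ω + G ω) := by
    intro ω; simp only [hXdef, hAdef, hGdef]; ring
  have iSum1 : Integrable (fun ω => S2 ω * X ω + G ω) μ := iS2X.add iG
  have iSum2 : Integrable (fun ω => A ω + (S2 ω * X ω + G ω)) μ := iA.add iSum1
  have iDY : Integrable (fun ω => (Y20 ω + S2 ω * D2 ω) - (Y10 ω + S1 ω * D1 ω)) μ :=
    iSum2.congr (Filter.Eventually.of_forall fun ω => (hDYeq ω).symm)
  have iSum3 : Integrable (fun ω => S2 ω * X ω ^ 2 + X ω * G ω) μ := iS2Xsq.add iXG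
  have iSum4 : Integrable (fun ω => X ω * A ω + (S2 ω * X ω ^ 2 + X ω * G ω)) μ :=
    iXA.add iSum3
  have iXDY : Integrable (fun ω => X ω * ((Y20 ω + S2 ω * D2 ω) - (Y10 ω + S1 ω * D1 ω))) μ := by
    refine iSum4.congr (Filter.Eventually.of_forall fun ω => ?_)
    simp only [hDYeq ω]; ring
  -- the key integral factorizations
  have hEXA : ∫ ω, X ω * A ω ∂μ = (∫ ω, X ω ∂μ) * (∫ ω, A ω ∂μ) :=
    hiA.integral_mul_eq_mul_integral iX.1 iA.1
  have hEXsqS2 : ∫ ω, S2 ω * X ω ^ 2 ∂μ = (∫ ω, X ω ^ 2 ∂μ) * (∫ ω, S2 ω ∂μ) := by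
    have h : IndepFun (fun ω => X ω ^ 2) S2 μ :=
      hiS2.comp (measurable_id.pow_const 2) measurable_id
    have h2 : ∫ ω, X ω ^ 2 * S2 ω ∂μ = (∫ ω, X ω ^ 2 ∂μ) * (∫ ω, S2 ω ∂μ) :=
      h.integral_mul_eq_mul_integral iXsq.1 iS2.1
    rw [show (∫ ω, S2 ω * X ω ^ 2 ∂μ) = ∫ ω, X ω ^ 2 * S2 ω ∂μ from
      integral_congr_ae (Filter.Eventually.of_forall fun ω => mul_comm _ _), h2]
  have hEXS2 : ∫ ω, S2 ω * X ω ∂μ = (∫ ω, X ω ∂μ) * (∫ ω, S2 ω ∂μ) := by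
    have h2 : ∫ ω, X ω * S2 ω ∂μ = (∫ ω, X ω ∂μ) * (∫ ω, S2 ω ∂μ) :=
      hiS2.integral_mul_eq_mul_integral iX.1 iS2.1
    rw [show (∫ ω, S2 ω * X ω ∂μ) = ∫ ω, X ω * S2 ω ∂μ from
      integral_congr_ae (Filter.Eventually.of_forall fun ω => mul_comm _ _), h2]
  -- covariance computations
  have hvarX : var μ X = (∫ ω, X ω ^ 2 ∂μ) - (∫ ω, X ω ∂μ) ^ 2 := by
    rw [var, mycov_eq μ iX iX iXX,
      show (∫ ω, X ω * X ω ∂μ) = ∫ ω, X ω ^ 2 ∂μ from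
        integral_congr_ae (Filter.Eventually.of_forall fun ω => by ring)]
    ring
  have hcovG : cov μ X G = (∫ ω, X ω * G ω ∂μ) - (∫ ω, X ω ∂μ) * (∫ ω, G ω ∂μ) :=
    mycov_eq μ iX iG iXG
  have hcovDY : cov μ X (fun ω => (Y20 ω + S2 ω * D2 ω) - (Y10 ω + S1 ω * D1 ω))
      = (∫ ω, S2 ω ∂μ) * var μ X + cov μ X G := by
    rw [mycov_eq μ iX iDY iXDY]
    have e1 : ∫ ω, X ω * ((Y20 ω + S2 ω * D2 ω) - (Y10 ω + S1 ω * D1 ω)) ∂μ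
        = (∫ ω, X ω * A ω ∂μ) + ((∫ ω, S2 ω * X ω ^ 2 ∂μ) + ∫ ω, X ω * G ω ∂μ) := by
      rw [show (∫ ω, X ω * ((Y20 ω + S2 ω * D2 ω) - (Y10 ω + S1 ω * D1 ω)) ∂μ)
          = ∫ ω, X ω * A ω + (S2 ω * X ω ^ 2 + X ω * G ω) ∂μ from
        integral_congr_ae (Filter.Eventually.of_forall fun ω => by
          simp only [hDYeq ω]; ring),
        integral_add iXA iSum3, integral_add iS2Xsq iXG]
    have e2 : ∫ ω, (Y20 ω + S2 ω * D2 ω) - (Y10 ω + S1 ω * D1 ω) ∂μ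
        = (∫ ω, A ω ∂μ) + ((∫ ω, S2 ω * X ω ∂μ) + ∫ ω, G ω ∂μ) := by
      rw [show (∫ ω, (Y20 ω + S2 ω * D2 ω) - (Y10 ω + S1 ω * D1 ω) ∂μ)
          = ∫ ω, A ω + (S2 ω * X ω + G ω) ∂μ from
        integral_congr_ae (Filter.Eventually.of_forall fun ω => hDYeq ω),
        integral_add iA iSum1, integral_add iS2X iG]
    rw [e1, e2, hEXA, hEXsqS2, hEXS2, hvarX, hcovG]
    ring
  rw [hcovDY]
  have hV : var μ X ≠ 0 := ne_of_gt hvar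
  field_simp
end

section
/- If D1 and D2 are random variables each taking values in {0, 1} with finite second moments, then V(D1) − cov(D1, D2) ≥ 0 and V(D2) − cov(D1, D2) ≥ 0. Consequently, when V(D2 − D1) > 0, the weights w_t = (V(D_t) − cov(D1, D2))/(V(D1) + V(D2) − 2·cov(D1, D2)), t = 1, 2, are nonnegative and sum to one. -/
open MeasureTheory ProbabilityTheory

section aux
variable {Ω : Type*} [MeasurableSpace Ω] (μ : Measure Ω) [IsProbabilityMeasure μ]

omit [IsProbabilityMeasure μ] in
lemma mul_int {f g : Ω → ℝ} (hf : MemLp f 2 μ) (hg : MemLp g 2 μ) :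
    Integrable (fun ω => f ω * g ω) μ := by
  have h := (((hf.add hg).integrable_sq.sub hf.integrable_sq).sub hg.integrable_sq).div_const 2
  have he : (fun ω => f ω * g ω) = fun ω => (((f ω + g ω)^2 - f ω^2) - g ω^2) / 2 := by
    ext ω; ring
  rw [he]; exact h

lemma cov_eq {f g : Ω → ℝ} (hf : MemLp f 2 μ) (hg : MemLp g 2 μ) :
    cov μ f g = (∫ ω, f ω * g ω ∂μ) - (∫ x, f x ∂μ) * (∫ x, g x ∂μ) := by
  have hif := hf.integrable one_le_two
  have hig := hg.integrable one_le_two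
  set mf := ∫ x, f x ∂μ
  set mg := ∫ x, g x ∂μ
  have he : (fun ω => (f ω - mf) * (g ω - mg))
      = fun ω => f ω * g ω - mf * g ω - mg * f ω + mf * mg := by ext ω; ring
  have h1 : Integrable (fun ω => f ω * g ω - mf * g ω) μ :=
    (mul_int μ hf hg).sub (hig.const_mul mf)
  have h2 : Integrable (fun ω => f ω * g ω - mf * g ω - mg * f ω) μ := h1.sub (hif.const_mul mg)
  rw [cov, he]
  rw [integral_add h2 (integrable_const _), integral_sub h1 (hif.const_mul mg),
    integral_sub (mul_int μ hf hg) (hig.const_mul mf),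
    integral_const_mul, integral_const_mul, integral_const]
  simp [mf, mg]
  ring

omit [IsProbabilityMeasure μ] in
lemma cov_comm (f g : Ω → ℝ) : cov μ f g = cov μ g f := by
  unfold cov; simp_rw [mul_comm]

lemma key {f g : Ω → ℝ} (hbf : ∀ ω, f ω = 0 ∨ f ω = 1) (hbg : ∀ ω, g ω = 0 ∨ g ω = 1)
    (hf : MemLp f 2 μ) (hg : MemLp g 2 μ) : 0 ≤ var μ f - cov μ f g := by
  have hif := hf.integrable one_le_two
  have hig := hg.integrable one_le_two
  set mf := ∫ x, f x ∂μ with hmf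
  have hmf0 : 0 ≤ mf := integral_nonneg (fun ω => by rcases hbf ω with h | h <;> simp [h])
  have hmf1 : mf ≤ 1 := by
    calc mf ≤ ∫ _x, (1:ℝ) ∂μ :=
          integral_mono hif (integrable_const 1)
            (fun ω => by rcases hbf ω with h | h <;> simp [h])
      _ = 1 := by simp
  have hnn : 0 ≤ ∫ ω, (f ω - g ω) * (f ω - mf) ∂μ := by
    refine integral_nonneg fun ω => ?_
    simp only [Pi.zero_apply]
    rcases hbf ω with h1 | h1 <;> rcases hbg ω with h2 | h2 <;> rw [h1, h2] <;> nlinarith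
  have heq : ∫ ω, (f ω - g ω) * (f ω - mf) ∂μ = var μ f - cov μ f g := by
    have he : (fun ω => (f ω - g ω) * (f ω - mf))
        = fun ω => (f ω * f ω - f ω * g ω - mf * f ω) + mf * g ω := by ext ω; ring
    have h1 : Integrable (fun ω => f ω * f ω - f ω * g ω) μ :=
      (mul_int μ hf hf).sub (mul_int μ hf hg)
    have h2 : Integrable (fun ω => f ω * f ω - f ω * g ω - mf * f ω) μ :=
      h1.sub (hif.const_mul mf)
    rw [he, integral_add h2 (hig.const_mul mf), integral_sub h1 (hif.const_mul mf),
      integral_sub (mul_int μ hf hf) (mul_int μ hf hg),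
      integral_const_mul, integral_const_mul,
      var, cov_eq μ hf hf, cov_eq μ hf hg]
    ring
  linarith [heq ▸ hnn]

lemma var_sub {f g : Ω → ℝ} (hf : MemLp f 2 μ) (hg : MemLp g 2 μ) :
    var μ (fun ω => g ω - f ω) = var μ f + var μ g - 2 * cov μ f g := by
  have hif := hf.integrable one_le_two
  have hig := hg.integrable one_le_two
  have hd : MemLp (fun ω => g ω - f ω) 2 μ := hg.sub hf
  have e1 : (fun ω => (g ω - f ω) * (g ω - f ω))
      = fun ω => (g ω * g ω - 2 * (f ω * g ω)) + f ω * f ω := by ext ω; ring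
  have h1 : Integrable (fun ω => g ω * g ω - 2 * (f ω * g ω)) μ :=
    (mul_int μ hg hg).sub ((mul_int μ hf hg).const_mul 2)
  rw [var, cov_eq μ hd hd, var, cov_eq μ hf hf, var, cov_eq μ hg hg, cov_eq μ hf hg, e1,
    integral_add h1 (mul_int μ hf hf), integral_sub (mul_int μ hg hg)
      ((mul_int μ hf hg).const_mul 2), integral_const_mul, integral_sub hig hif]
  ring

end aux

/-- With binary treatments, the weights in the random-paths decomposition are nonnegative
and sum to one. -/
theorem stmt3 {Ω : Type*} [MeasurableSpace Ω] (μ : Measure Ω) [IsProbabilityMeasure μ]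
    (D1 D2 : Ω → ℝ)
    (hb1 : ∀ ω, D1 ω = 0 ∨ D1 ω = 1) (hb2 : ∀ ω, D2 ω = 0 ∨ D2 ω = 1)
    (hD1 : MemLp D1 2 μ) (hD2 : MemLp D2 2 μ) :
    0 ≤ var μ D1 - cov μ D1 D2 ∧ 0 ≤ var μ D2 - cov μ D1 D2 ∧
    (0 < var μ (fun ω => D2 ω - D1 ω) →
      0 ≤ (var μ D1 - cov μ D1 D2) / (var μ D1 + var μ D2 - 2 * cov μ D1 D2) ∧
      0 ≤ (var μ D2 - cov μ D1 D2) / (var μ D1 + var μ D2 - 2 * cov μ D1 D2) ∧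
      (var μ D1 - cov μ D1 D2) / (var μ D1 + var μ D2 - 2 * cov μ D1 D2)
        + (var μ D2 - cov μ D1 D2) / (var μ D1 + var μ D2 - 2 * cov μ D1 D2) = 1) := by
  have k1 : 0 ≤ var μ D1 - cov μ D1 D2 := key μ hb1 hb2 hD1 hD2
  have k2 : 0 ≤ var μ D2 - cov μ D1 D2 := by
    have := key μ hb2 hb1 hD2 hD1
    rwa [cov_comm μ D2 D1] at this
  refine ⟨k1, k2, fun hpos => ?_⟩
  have hs : 0 < var μ D1 + var μ D2 - 2 * cov μ D1 D2 := by
    rwa [var_sub μ hD1 hD2] at hpos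
  refine ⟨div_nonneg k1 hs.le, div_nonneg k2 hs.le, ?_⟩
  rw [← add_div]
  have : var μ D1 - cov μ D1 D2 + (var μ D2 - cov μ D1 D2)
      = var μ D1 + var μ D2 - 2 * cov μ D1 D2 := by ring
  rw [this, div_self hs.ne']
end

section
/- Let D1 and D2 be random variables taking values in the bounded interval [a, b] with a < b, such that P(D1 = a) > 0 and P(D1 = b) > 0, and such that the conditional distribution of ΔD = D2 − D1 given D1 = d is non-degenerate for all d in {a, b}. Then ΔD is not independent of D1. -/
/-!
Independence makes the law of `ΔD = D2 - D1` equal to its conditional law given `D1 = a` and to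
its conditional law given `D1 = b`. As `a ≤ D2 ≤ b`, the first lives on `[0, ∞)` and the second on
`(-∞, 0]`, so all three are the point mass at `0`, against non-degeneracy at `a`.
-/

open MeasureTheory ProbabilityTheory

namespace ProbabilityTheory

variable {Ω β γ : Type*} [MeasurableSpace Ω] [MeasurableSpace β] [MeasurableSpace γ]
  {μ : Measure Ω} {X : Ω → β} {Y : Ω → γ}

lemma IndepFun.map_cond_preimage [IsFiniteMeasure μ] (hXY : IndepFun X Y μ) (hX : Measurable X)
    (hY : Measurable Y) {t : Set γ} (ht : MeasurableSet t) (hμt : μ (Y ⁻¹' t) ≠ 0) :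
    (μ[|Y ⁻¹' t]).map X = μ.map X := by
  ext s hs
  rw [Measure.map_apply hX hs, Measure.map_apply hX hs, cond_apply (hY ht), Set.inter_comm,
    hXY.measure_inter_preimage_eq_mul s t hs ht, mul_left_comm,
    ENNReal.inv_mul_cancel hμt (measure_ne_top μ _), mul_one]

lemma ae_map_cond_of_forall_mem {f : Ω → β} (hf : Measurable f) {s : Set Ω} (hs : MeasurableSet s)
    {p : β → Prop} (hp : MeasurableSet {x | p x}) (h : ∀ ω ∈ s, p (f ω)) :
    ∀ᵐ x ∂(μ[|s]).map f, p x :=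
  (ae_map_iff hf.aemeasurable hp).2 (ae_cond_of_forall_mem hs h)

end ProbabilityTheory

namespace MeasureTheory.Measure

lemma eq_dirac_of_ae_eq {α : Type*} [MeasurableSpace α] {ν : Measure α} [IsProbabilityMeasure ν]
    {c : α} (h : ∀ᵐ x ∂ν, x = c) : ν = dirac c := by
  calc ν = ν.map id := Measure.map_id.symm
    _ = ν.map (fun _ ↦ c) := Measure.map_congr h
    _ = dirac c := by rw [Measure.map_const, measure_univ, one_smul]

end MeasureTheory.Measure

theorem stmt6_general {Ω : Type*} [MeasurableSpace Ω] (μ : Measure Ω) [IsProbabilityMeasure μ]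
    (D1 D2 : Ω → ℝ) (hm1 : Measurable D1) (hm2 : Measurable D2)
    (a b : ℝ)
    (hs2 : ∀ ω, D2 ω ∈ Set.Icc a b)
    (ha : 0 < μ {ω | D1 ω = a}) (hb : 0 < μ {ω | D1 ω = b})
    (hnd : ∀ d ∈ ({a, b} : Set ℝ), ∀ c : ℝ,
      Measure.map (fun ω => D2 ω - D1 ω) (ProbabilityTheory.cond μ {ω | D1 ω = d})
        ≠ Measure.dirac c) :
    ¬ IndepFun (fun ω => D2 ω - D1 ω) D1 μ := by
  intro hind
  set Δ : Ω → ℝ := fun ω => D2 ω - D1 ω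
  have hΔ : Measurable Δ := hm2.sub hm1
  have hlaw : ∀ d, 0 < μ {ω | D1 ω = d} → (μ[|{ω | D1 ω = d}]).map Δ = μ.map Δ :=
    fun d hd ↦ hind.map_cond_preimage hΔ hm1 (measurableSet_singleton d) hd.ne'
  have hnonneg : ∀ᵐ x ∂μ.map Δ, 0 ≤ x := by
    rw [← hlaw a ha]
    refine ae_map_cond_of_forall_mem hΔ (hm1 (measurableSet_singleton a)) measurableSet_Ici ?_
    intro ω (hω : D1 ω = a)
    linarith [(hs2 ω).1]
  have hnonpos : ∀ᵐ x ∂μ.map Δ, x ≤ 0 := by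
    rw [← hlaw b hb]
    refine ae_map_cond_of_forall_mem hΔ (hm1 (measurableSet_singleton b)) measurableSet_Iic ?_
    intro ω (hω : D1 ω = b)
    linarith [(hs2 ω).2]
  have : IsProbabilityMeasure (μ.map Δ) := Measure.isProbabilityMeasure_map hΔ.aemeasurable
  have hdirac : μ.map Δ = Measure.dirac 0 :=
    Measure.eq_dirac_of_ae_eq <| by
      filter_upwards [hnonneg, hnonpos] with x h₀ h₁ using le_antisymm h₁ h₀
  exact hnd a (Set.mem_insert a _) 0 ((hlaw a ha).trans hdirac)

/-- If `D1` and `D2` share the bounded support `[a, b]` and the conditional distribution of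
`ΔD` given `D1 = d` is non-degenerate at the boundary points, then `ΔD` is not independent
of `D1`. -/
theorem stmt6 {Ω : Type*} [MeasurableSpace Ω] (μ : Measure Ω) [IsProbabilityMeasure μ]
    (D1 D2 : Ω → ℝ) (hm1 : Measurable D1) (hm2 : Measurable D2)
    (a b : ℝ) (hab : a < b)
    (hs1 : ∀ ω, D1 ω ∈ Set.Icc a b) (hs2 : ∀ ω, D2 ω ∈ Set.Icc a b)
    (ha : 0 < μ {ω | D1 ω = a}) (hb : 0 < μ {ω | D1 ω = b})
    (hnd : ∀ d ∈ ({a, b} : Set ℝ), ∀ c : ℝ,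
      Measure.map (fun ω => D2 ω - D1 ω) (ProbabilityTheory.cond μ {ω | D1 ω = d})
        ≠ Measure.dirac c) :
    ¬ IndepFun (fun ω => D2 ω - D1 ω) D1 μ :=
  stmt6_general μ D1 D2 hm1 hm2 a b hs2 ha hb hnd
end

section
/- Consider three periods t = 0, 1, 2 with the linear model Yt = Yt(0) + St·Dt, and let ΔY_{−1} = Y1 − Y0, ΔD_{−1} = D1 − D0, ΔD = D2 − D1, ΔS_{−1} = S1 − S0. Suppose ΔD is conditionally independent of (Y1(0) − Y0(0), Y2(0) − Y1(0), S0, S1, S2) given (D0, D1), all variables have finite second moments, and let ΔD_{r,2} = ΔD − E(ΔD | D0, D1) with V(ΔD_{r,2}) > 0. Then the placebo coefficient β^{pl} = cov(ΔD_{r,2}, ΔY_{−1})/V(ΔD_{r,2}) equals 0. -/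
open MeasureTheory ProbabilityTheory

namespace Stmt10Aux
open MeasureTheory ProbabilityTheory MeasurableSpace Set Filter
open scoped ENNReal


variable {Ω : Type*} {m' : MeasurableSpace Ω} {mΩ : MeasurableSpace Ω} [StandardBorelSpace Ω]
  {μ : Measure Ω} [IsProbabilityMeasure μ]

/-- a.e. equality transfers to the condexp kernel, trim-a.e. -/
lemma ae_ae_eq_condExpKernel (hm' : m' ≤ mΩ) {f g : Ω → ℝ} (h : f =ᵐ[μ] g) :
    ∀ᵐ ω ∂(μ.trim hm'), f =ᵐ[condExpKernel μ m' ω] g := by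
  set N := toMeasurable μ {x | f x ≠ g x} with hNdef
  have hNm : MeasurableSet N := measurableSet_toMeasurable _ _
  have hNμ : μ N = 0 := by rw [hNdef, measure_toMeasurable]; exact h
  have h1 : (fun ω => (condExpKernel μ m' ω N).toReal) =ᵐ[μ] μ⟦N | m'⟧ :=
    condExpKernel_ae_eq_condExp hm' hNm
  have h2 : μ⟦N | m'⟧ =ᵐ[μ] 0 := by
    have h0 : (N.indicator (fun _ => (1:ℝ))) =ᵐ[μ] 0 := by
      rw [Filter.EventuallyEq, ae_iff]
      refine measure_mono_null (fun x hx => ?_) hNμ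
      simp only [Set.mem_setOf_eq, Pi.zero_apply] at hx
      by_contra hmem
      exact hx (Set.indicator_of_notMem hmem _)
    calc μ⟦N | m'⟧ =ᵐ[μ] μ[(0 : Ω → ℝ) | m'] := condExp_congr_ae h0
    _ = 0 := condExp_zero
  have h3 : ∀ᵐ ω ∂μ, condExpKernel μ m' ω N = 0 := by
    filter_upwards [h1, h2] with ω e1 e2
    have ht : (condExpKernel μ m' ω N).toReal = 0 := by
      rw [e1, e2]; rfl
    exact ((ENNReal.toReal_eq_zero_iff _).mp ht).resolve_right (measure_ne_top _ _)
  have hS : MeasurableSet[m'] {ω | ¬ condExpKernel μ m' ω N = 0} := by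
    have := (measurable_condExpKernel (μ := μ) (m := m') hNm) (measurableSet_singleton (0:ℝ≥0∞)).compl
    exact this
  have h4 : (μ.trim hm') {ω | ¬ condExpKernel μ m' ω N = 0} = 0 := by
    rw [trim_measurableSet_eq hm' hS, ← ae_iff]; exact h3
  have h5 : ∀ᵐ ω ∂(μ.trim hm'), condExpKernel μ m' ω N = 0 := by
    rw [ae_iff]; exact h4
  filter_upwards [h5] with ω hω
  rw [Filter.EventuallyEq, ae_iff]
  exact measure_mono_null (fun x hx => subset_toMeasurable μ _ hx) hω

/-- an `m'`-measurable function is a.s. constant under the condexp kernel. -/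
lemma condExpKernel_ae_eq_const (hm' : m' ≤ mΩ) {φ : Ω → ℝ} (hφ : Measurable[m'] φ) :
    ∀ᵐ ω ∂μ, φ =ᵐ[condExpKernel μ m' ω] (fun _ => φ ω) := by
  have key : ∀ᵐ ω ∂μ, ∀ q : ℚ, (condExpKernel μ m' ω (φ ⁻¹' Iic (q:ℝ))).toReal
      = (φ ⁻¹' Iic (q:ℝ)).indicator (fun _ => (1:ℝ)) ω := by
    rw [ae_all_iff]
    intro q
    have hs' : MeasurableSet[m'] (φ ⁻¹' Iic (q:ℝ)) := hφ measurableSet_Iic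
    have h1 := condExpKernel_ae_eq_condExp (μ := μ) hm' (hm' _ hs')
    have h2 : μ⟦φ ⁻¹' Iic (q:ℝ) | m'⟧ = (φ ⁻¹' Iic (q:ℝ)).indicator (fun _ => (1:ℝ)) :=
      condExp_of_stronglyMeasurable hm'
        ((stronglyMeasurable_const (β := ℝ)).indicator hs')
        ((integrable_const (1:ℝ)).indicator (hm' _ hs'))
    filter_upwards [h1] with ω e1
    rw [← measureReal_def, e1, h2]
  filter_upwards [key] with ω hω
  haveI : IsProbabilityMeasure (condExpKernel μ m' ω) := inferInstance
  set ν := condExpKernel μ m' ω with hν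
  set c := φ ω with hc
  have hq1 : ∀ q : ℚ, c ≤ (q:ℝ) → ν (φ ⁻¹' Iic (q:ℝ))ᶜ = 0 := by
    intro q hq
    have hmem : ω ∈ φ ⁻¹' Iic (q:ℝ) := hq
    have ht := hω q
    rw [Set.indicator_of_mem hmem] at ht
    have hν1 : ν (φ ⁻¹' Iic (q:ℝ)) = 1 := by
      have := measure_ne_top ν (φ ⁻¹' Iic (q:ℝ))
      rw [← ENNReal.ofReal_toReal this, ht]; simp
    rw [measure_compl (hm' _ (hφ measurableSet_Iic)) (measure_ne_top _ _), hν1, measure_univ,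
      tsub_self]
  have hq2 : ∀ q : ℚ, (q:ℝ) < c → ν (φ ⁻¹' Iic (q:ℝ)) = 0 := by
    intro q hq
    have hnmem : ω ∉ φ ⁻¹' Iic (q:ℝ) := by
      simp only [Set.mem_preimage, Set.mem_Iic, not_le]; exact hq
    have ht := hω q
    rw [Set.indicator_of_notMem hnmem] at ht
    exact ((ENNReal.toReal_eq_zero_iff _).mp ht).resolve_right (measure_ne_top _ _)
  rw [Filter.EventuallyEq, ae_iff]
  have hsub : {x | ¬ φ x = c} ⊆
      (⋃ q : ℚ, if c ≤ (q:ℝ) then (φ ⁻¹' Iic (q:ℝ))ᶜ else ∅)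
      ∪ (⋃ q : ℚ, if (q:ℝ) < c then (φ ⁻¹' Iic (q:ℝ)) else ∅) := by
    intro x hx
    rcases lt_or_gt_of_ne (Set.mem_setOf_eq ▸ hx) with hlt | hgt
    · obtain ⟨q, hq1', hq2'⟩ := exists_rat_btwn hlt
      refine Or.inr (Set.mem_iUnion.mpr ⟨q, ?_⟩)
      rw [if_pos hq2']
      exact le_of_lt hq1'
    · obtain ⟨q, hq1', hq2'⟩ := exists_rat_btwn hgt
      refine Or.inl (Set.mem_iUnion.mpr ⟨q, ?_⟩)
      rw [if_pos (le_of_lt hq1')]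
      simp only [Set.mem_compl_iff, Set.mem_preimage, Set.mem_Iic, not_le]
      exact hq2'
  refine measure_mono_null hsub (measure_union_null ?_ ?_)
  · refine measure_iUnion_null fun q => ?_
    by_cases h : c ≤ (q:ℝ)
    · rw [if_pos h]; exact hq1 q h
    · rw [if_neg h]; exact measure_empty
  · refine measure_iUnion_null fun q => ?_
    by_cases h : (q:ℝ) < c
    · rw [if_pos h]; exact hq2 q h
    · rw [if_neg h]; exact measure_empty

lemma isPiSystem_preimage_Iic_rat (f : Ω → ℝ) :
    IsPiSystem (⋃ q : ℚ, {f ⁻¹' Iic (q:ℝ)}) := by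
  rintro s hs t ht -
  simp only [Set.mem_iUnion, Set.mem_singleton_iff] at hs ht ⊢
  obtain ⟨q, rfl⟩ := hs
  obtain ⟨r, rfl⟩ := ht
  refine ⟨min q r, ?_⟩
  rw [← Set.preimage_inter, Set.Iic_inter_Iic]
  norm_cast

lemma comap_eq_generateFrom_preimage_Iic_rat (f : Ω → ℝ) :
    MeasurableSpace.comap f (inferInstance : MeasurableSpace ℝ)
      = MeasurableSpace.generateFrom (⋃ q : ℚ, {f ⁻¹' Iic (q:ℝ)}) := by
  conv_lhs => rw [(BorelSpace.measurable_eq : (inferInstance : MeasurableSpace ℝ) = borel ℝ),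
    Real.borel_eq_generateFrom_Iic_rat, MeasurableSpace.comap_generateFrom]
  congr 1
  simp only [Set.iUnion_singleton_eq_range, ← Set.range_comp]
  rfl

/-- conditional independence gives a.e. independence under the condexp kernel. -/
lemma ae_indepFun_condExpKernel (hm' : m' ≤ mΩ) {f g : Ω → ℝ}
    (hf : Measurable f) (hg : Measurable g)
    (hci : CondIndepFun m' hm' f g μ) :
    ∀ᵐ ω ∂(μ.trim hm'), IndepFun f g (condExpKernel μ m' ω) := by
  have key : ∀ᵐ ω ∂(μ.trim hm'), ∀ q r : ℚ,
      condExpKernel μ m' ω (f ⁻¹' Iic (q:ℝ) ∩ g ⁻¹' Iic (r:ℝ))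
        = condExpKernel μ m' ω (f ⁻¹' Iic (q:ℝ)) * condExpKernel μ m' ω (g ⁻¹' Iic (r:ℝ)) := by
    rw [ae_all_iff]
    intro q
    rw [ae_all_iff]
    intro r
    exact hci _ _ ⟨Iic (q:ℝ), measurableSet_Iic, rfl⟩ ⟨Iic (r:ℝ), measurableSet_Iic, rfl⟩
  filter_upwards [key] with ω hω
  haveI : IsProbabilityMeasure (condExpKernel μ m' ω) := inferInstance
  have h1 : IndepSets (⋃ q : ℚ, {f ⁻¹' Iic (q:ℝ)}) (⋃ r : ℚ, {g ⁻¹' Iic (r:ℝ)})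
      (condExpKernel μ m' ω) := by
    rintro t1 t2 ht1 ht2
    simp only [Set.mem_iUnion, Set.mem_singleton_iff] at ht1 ht2
    obtain ⟨q, rfl⟩ := ht1
    obtain ⟨r, rfl⟩ := ht2
    exact Filter.Eventually.of_forall fun _ => hω q r
  exact IndepSets.indep hf.comap_le hg.comap_le
    (isPiSystem_preimage_Iic_rat f) (isPiSystem_preimage_Iic_rat g)
    (comap_eq_generateFrom_preimage_Iic_rat f)
    (comap_eq_generateFrom_preimage_Iic_rat g) h1




theorem memLp_two_mul_integrable {f g : Ω → ℝ} (hf : MemLp f 2 μ) (hg : MemLp g 2 μ) :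
    Integrable (fun ω => f ω * g ω) μ := by
  have h : MemLp (f • g) 1 μ := by
    haveI : ENNReal.HolderTriple 2 2 1 := ⟨by rw [inv_one, ENNReal.inv_two_add_inv_two]⟩
    exact hg.smul hf
  exact memLp_one_iff_integrable.mp h

theorem aux_cov_zero (μ : Measure Ω) [IsProbabilityMeasure μ] (hm' : m' ≤ mΩ)
    {X A S0 S1 D0 D1 : Ω → ℝ}
    (hd0 : Measurable[m'] D0) (hd1 : Measurable[m'] D1)
    (hX2 : MemLp X 2 μ) (hA2 : MemLp A 2 μ) (hS02 : MemLp S0 2 μ) (hS12 : MemLp S1 2 μ)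
    (hD02 : MemLp D0 2 μ) (hD12 : MemLp D1 2 μ)
    (hciA : CondIndepFun m' hm' X A μ)
    (hciS0 : CondIndepFun m' hm' X S0 μ)
    (hciS1 : CondIndepFun m' hm' X S1 μ) :
    cov μ (fun ω => X ω - (μ[X | m']) ω)
      (fun ω => A ω + S1 ω * D1 ω - S0 ω * D0 ω) = 0 := by
  set Xc := μ[X | m'] with hXcdef
  set R : Ω → ℝ := fun ω => X ω - Xc ω with hRdef
  set Z : Ω → ℝ := fun ω => A ω + S1 ω * D1 ω - S0 ω * D0 ω with hZdef
  have hX_int : Integrable X μ := hX2.integrable one_le_two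
  have hXc_int : Integrable Xc μ := by rw [hXcdef]; exact integrable_condExp
  have hR_int : Integrable R μ := by
    rw [hRdef]; exact hX_int.sub hXc_int
  have hIR : ∫ ω, R ω ∂μ = 0 := by
    simp only [hRdef]
    rw [integral_sub hX_int hXc_int, hXcdef, integral_condExp hm', sub_self]
  have hZ_int : Integrable Z μ := by
    rw [hZdef]
    exact ((hA2.integrable one_le_two).add (memLp_two_mul_integrable hS12 hD12)).sub
      (memLp_two_mul_integrable hS02 hD02)
  set zb := ∫ ω, Z ω ∂μ with hzb
  have hcov_eq : cov μ R Z = ∫ ω, R ω * (Z ω - zb) ∂μ := by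
    simp only [cov, hIR, sub_zero, ← hzb]
  by_cases hint : Integrable (fun ω => R ω * (Z ω - zb)) μ
  swap
  · rw [hcov_eq, integral_undef hint]
  have hRZ_int : Integrable (fun ω => R ω * Z ω) μ := by
    have he : (fun ω => R ω * Z ω) = fun ω => R ω * (Z ω - zb) + zb * R ω := by
      funext ω; ring
    rw [he]
    exact hint.add (hR_int.const_mul zb)
  rw [hcov_eq]
  have hsplit : ∫ ω, R ω * (Z ω - zb) ∂μ = ∫ ω, R ω * Z ω ∂μ - (∫ ω, R ω * zb ∂μ) := by
    simp only [mul_sub]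
    exact integral_sub hRZ_int (hR_int.mul_const zb)
  rw [hsplit, integral_mul_const, hIR, zero_mul, sub_zero]
  -- measurable representatives
  set X' := hX2.1.mk X with hX'def
  have hX'meas : Measurable X' := hX2.1.stronglyMeasurable_mk.measurable
  have hXX' : X =ᵐ[μ] X' := hX2.1.ae_eq_mk
  set A' := hA2.1.mk A with hA'def
  have hA'meas : Measurable A' := hA2.1.stronglyMeasurable_mk.measurable
  have hAA' : A =ᵐ[μ] A' := hA2.1.ae_eq_mk
  set S0' := hS02.1.mk S0 with hS0'def
  have hS0'meas : Measurable S0' := hS02.1.stronglyMeasurable_mk.measurable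
  have hSS0' : S0 =ᵐ[μ] S0' := hS02.1.ae_eq_mk
  set S1' := hS12.1.mk S1 with hS1'def
  have hS1'meas : Measurable S1' := hS12.1.stronglyMeasurable_mk.measurable
  have hSS1' : S1 =ᵐ[μ] S1' := hS12.1.ae_eq_mk
  -- conditional independence of representatives
  have kciA : CondIndepFun m' hm' X' A' μ :=
    Kernel.IndepFun.congr' hciA (ae_ae_eq_condExpKernel hm' hXX') (ae_ae_eq_condExpKernel hm' hAA')
  have kciS0 : CondIndepFun m' hm' X' S0' μ :=
    Kernel.IndepFun.congr' hciS0 (ae_ae_eq_condExpKernel hm' hXX') (ae_ae_eq_condExpKernel hm' hSS0')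
  have kciS1 : CondIndepFun m' hm' X' S1' μ :=
    Kernel.IndepFun.congr' hciS1 (ae_ae_eq_condExpKernel hm' hXX') (ae_ae_eq_condExpKernel hm' hSS1')
  -- a.e. facts
  have hIA := ae_of_ae_trim hm' (ae_indepFun_condExpKernel hm' hX'meas hA'meas kciA)
  have hIS0 := ae_of_ae_trim hm' (ae_indepFun_condExpKernel hm' hX'meas hS0'meas kciS0)
  have hIS1 := ae_of_ae_trim hm' (ae_indepFun_condExpKernel hm' hX'meas hS1'meas kciS1)
  have hkX : ∀ᵐ ω ∂μ, Integrable X' (condExpKernel μ m' ω) :=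
    Integrable.condExpKernel_ae (m := m') (hX_int.congr hXX')
  have hkA : ∀ᵐ ω ∂μ, Integrable A' (condExpKernel μ m' ω) :=
    Integrable.condExpKernel_ae (m := m') ((hA2.integrable one_le_two).congr hAA')
  have hkS0 : ∀ᵐ ω ∂μ, Integrable S0' (condExpKernel μ m' ω) :=
    Integrable.condExpKernel_ae (m := m') ((hS02.integrable one_le_two).congr hSS0')
  have hkS1 : ∀ᵐ ω ∂μ, Integrable S1' (condExpKernel μ m' ω) :=
    Integrable.condExpKernel_ae (m := m') ((hS12.integrable one_le_two).congr hSS1')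
  have haeX := ae_of_ae_trim hm' (ae_ae_eq_condExpKernel hm' hXX')
  have haeA := ae_of_ae_trim hm' (ae_ae_eq_condExpKernel hm' hAA')
  have haeS0 := ae_of_ae_trim hm' (ae_ae_eq_condExpKernel hm' hSS0')
  have haeS1 := ae_of_ae_trim hm' (ae_ae_eq_condExpKernel hm' hSS1')
  have hconstD0 : ∀ᵐ ω ∂μ, D0 =ᵐ[condExpKernel μ m' ω] (fun _ => D0 ω) :=
    condExpKernel_ae_eq_const hm' hd0
  have hconstD1 : ∀ᵐ ω ∂μ, D1 =ᵐ[condExpKernel μ m' ω] (fun _ => D1 ω) :=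
    condExpKernel_ae_eq_const hm' hd1
  have hXcm : Measurable[m'] Xc := by
    rw [hXcdef]; exact stronglyMeasurable_condExp.measurable
  have hconstXc : ∀ᵐ ω ∂μ, Xc =ᵐ[condExpKernel μ m' ω] (fun _ => Xc ω) :=
    condExpKernel_ae_eq_const hm' hXcm
  have hXcK : Xc =ᵐ[μ] fun ω => ∫ y, X y ∂condExpKernel μ m' ω := by
    rw [hXcdef]; exact condExp_ae_eq_integral_condExpKernel hm' hX_int
  have hRZcond : μ[fun ω => R ω * Z ω | m']
      =ᵐ[μ] fun ω => ∫ y, R y * Z y ∂condExpKernel μ m' ω :=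
    condExp_ae_eq_integral_condExpKernel hm' hRZ_int
  have hzero : (fun ω => ∫ y, R y * Z y ∂condExpKernel μ m' ω) =ᵐ[μ] 0 := by
    filter_upwards [hIA, hIS0, hIS1, hkX, hkA, hkS0, hkS1, haeX, haeA, haeS0, haeS1,
      hconstD0, hconstD1, hconstXc, hXcK] with ω iA iS0 iS1 kX kA kS0 kS1 aX aA aS0 aS1
      cD0 cD1 cXc xk
    set ν := condExpKernel μ m' ω with hνdef
    haveI : IsProbabilityMeasure ν := by rw [hνdef]; infer_instance
    show ∫ y, R y * Z y ∂ν = 0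
    set c := Xc ω with hcdef
    set d0 := D0 ω with hd0def
    set d1 := D1 ω with hd1def
    have he : (fun y => R y * Z y)
        =ᵐ[ν] fun y => (X' y - c) * (A' y + S1' y * d1 - S0' y * d0) := by
      filter_upwards [aX, aA, aS0, aS1, cD0, cD1, cXc] with y e1 e2 e3 e4 e5 e6 e7
      simp only [hRdef, hZdef]
      rw [e1, e2, e3, e4, e5, e6, e7]
    rw [integral_congr_ae he]
    have hX'c : Integrable (fun y => X' y - c) ν := kX.sub (integrable_const c)
    have iA' : IndepFun (fun y => X' y - c) A' ν :=
      iA.comp (measurable_id.sub_const c) measurable_id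
    have iS0' : IndepFun (fun y => X' y - c) S0' ν :=
      iS0.comp (measurable_id.sub_const c) measurable_id
    have iS1' : IndepFun (fun y => X' y - c) S1' ν :=
      iS1.comp (measurable_id.sub_const c) measurable_id
    have pA : Integrable (fun y => (X' y - c) * A' y) ν := iA'.integrable_mul hX'c kA
    have pS0 : Integrable (fun y => (X' y - c) * S0' y) ν := iS0'.integrable_mul hX'c kS0
    have pS1 : Integrable (fun y => (X' y - c) * S1' y) ν := iS1'.integrable_mul hX'c kS1
    have hzX : ∫ y, (X' y - c) ∂ν = 0 := by
      rw [integral_sub kX (integrable_const c), integral_const, probReal_univ,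
        one_smul, ← integral_congr_ae aX, ← xk]
      exact sub_self c
    have eA : ∫ y, (X' y - c) * A' y ∂ν = 0 := by
      have h : ∫ y, (X' y - c) * A' y ∂ν
          = (∫ y, (X' y - c) ∂ν) * ∫ y, A' y ∂ν := iA'.integral_fun_mul_eq_mul_integral hX'c.1 kA.1
      rw [h, hzX, zero_mul]
    have eS0 : ∫ y, (X' y - c) * S0' y ∂ν = 0 := by
      have h : ∫ y, (X' y - c) * S0' y ∂ν
          = (∫ y, (X' y - c) ∂ν) * ∫ y, S0' y ∂ν := iS0'.integral_fun_mul_eq_mul_integral hX'c.1 kS0.1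
      rw [h, hzX, zero_mul]
    have eS1 : ∫ y, (X' y - c) * S1' y ∂ν = 0 := by
      have h : ∫ y, (X' y - c) * S1' y ∂ν
          = (∫ y, (X' y - c) ∂ν) * ∫ y, S1' y ∂ν := iS1'.integral_fun_mul_eq_mul_integral hX'c.1 kS1.1
      rw [h, hzX, zero_mul]
    have hexp : (fun y => (X' y - c) * (A' y + S1' y * d1 - S0' y * d0))
        = fun y => ((X' y - c) * A' y + ((X' y - c) * S1' y) * d1)
            - ((X' y - c) * S0' y) * d0 := by
      funext y; ring
    have q1 : Integrable (fun y => (X' y - c) * A' y + ((X' y - c) * S1' y) * d1) ν :=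
      pA.add (pS1.mul_const d1)
    have q2 : Integrable (fun y => ((X' y - c) * S0' y) * d0) ν := pS0.mul_const d0
    have qb : Integrable (fun y => ((X' y - c) * S1' y) * d1) ν := pS1.mul_const d1
    rw [hexp, integral_sub q1 q2, integral_add pA qb, integral_mul_const, integral_mul_const,
      eA, eS0, eS1]
    simp
  calc ∫ ω, R ω * Z ω ∂μ
      = ∫ ω, (μ[fun ω' => R ω' * Z ω' | m']) ω ∂μ := (integral_condExp hm').symm
    _ = 0 := by
      rw [integral_congr_ae (hRZcond.trans hzero)]; simp

end Stmt10Aux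

/-- Placebo: under conditional randomization given `(D0, D1)`, the placebo coefficient
from regressing the lagged outcome evolution on the residualized `ΔD` is zero. -/
theorem stmt10 {Ω : Type*} [MeasurableSpace Ω] [StandardBorelSpace Ω]
    (μ : Measure Ω) [IsProbabilityMeasure μ]
    (Y00 Y10 Y20 S0 S1 S2 D0 D1 D2 : Ω → ℝ)
    (hmD0 : Measurable D0) (hmD1 : Measurable D1)
    (hY00 : MemLp Y00 2 μ) (hY10 : MemLp Y10 2 μ) (hY20 : MemLp Y20 2 μ)
    (hS0 : MemLp S0 2 μ) (hS1 : MemLp S1 2 μ) (hS2 : MemLp S2 2 μ)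
    (hD0 : MemLp D0 2 μ) (hD1 : MemLp D1 2 μ) (hD2 : MemLp D2 2 μ)
    (hci : CondIndepFun
      (MeasurableSpace.comap (fun ω => (D0 ω, D1 ω)) inferInstance)
      ((hmD0.prodMk hmD1).comap_le)
      (fun ω => D2 ω - D1 ω)
      (fun ω => (Y10 ω - Y00 ω, Y20 ω - Y10 ω, S0 ω, S1 ω, S2 ω)) μ)
    (hpos : 0 < var μ (fun ω => (D2 ω - D1 ω)
      - cexp μ (fun ω' => (D0 ω', D1 ω')) (fun ω' => D2 ω' - D1 ω') ω)) :
    cov μ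
        (fun ω => (D2 ω - D1 ω)
          - cexp μ (fun ω' => (D0 ω', D1 ω')) (fun ω' => D2 ω' - D1 ω') ω)
        (fun ω => (Y10 ω + S1 ω * D1 ω) - (Y00 ω + S0 ω * D0 ω)) /
      var μ (fun ω => (D2 ω - D1 ω)
        - cexp μ (fun ω' => (D0 ω', D1 ω')) (fun ω' => D2 ω' - D1 ω') ω)
    = 0 := by
  have hciA : CondIndepFun
      (MeasurableSpace.comap (fun ω => (D0 ω, D1 ω)) inferInstance)
      ((hmD0.prodMk hmD1).comap_le)
      (fun ω => D2 ω - D1 ω) (fun ω => Y10 ω - Y00 ω) μ :=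
    hci.comp measurable_id measurable_fst
  have hciS0 : CondIndepFun
      (MeasurableSpace.comap (fun ω => (D0 ω, D1 ω)) inferInstance)
      ((hmD0.prodMk hmD1).comap_le)
      (fun ω => D2 ω - D1 ω) S0 μ :=
    hci.comp measurable_id (measurable_fst.comp (measurable_snd.comp measurable_snd))
  have hciS1 : CondIndepFun
      (MeasurableSpace.comap (fun ω => (D0 ω, D1 ω)) inferInstance)
      ((hmD0.prodMk hmD1).comap_le)
      (fun ω => D2 ω - D1 ω) S1 μ :=
    hci.comp measurable_id
      (measurable_fst.comp (measurable_snd.comp (measurable_snd.comp measurable_snd)))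
  have hWm : Measurable[MeasurableSpace.comap (fun ω => (D0 ω, D1 ω)) inferInstance]
      (fun ω => (D0 ω, D1 ω)) := Measurable.of_comap_le le_rfl
  have hd0 : Measurable[MeasurableSpace.comap (fun ω => (D0 ω, D1 ω)) inferInstance] D0 :=
    measurable_fst.comp hWm
  have hd1 : Measurable[MeasurableSpace.comap (fun ω => (D0 ω, D1 ω)) inferInstance] D1 :=
    measurable_snd.comp hWm
  have hkey := Stmt10Aux.aux_cov_zero μ ((hmD0.prodMk hmD1).comap_le) hd0 hd1
    (hD2.sub hD1) (hY10.sub hY00) hS0 hS1 hD0 hD1 hciA hciS0 hciS1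
  have hZeq : (fun ω => (Y10 ω + S1 ω * D1 ω) - (Y00 ω + S0 ω * D0 ω))
      = fun ω => (Y10 ω - Y00 ω) + S1 ω * D1 ω - S0 ω * D0 ω := by
    funext ω; ring
  have h0 : cov μ
      (fun ω => (D2 ω - D1 ω)
        - cexp μ (fun ω' => (D0 ω', D1 ω')) (fun ω' => D2 ω' - D1 ω') ω)
      (fun ω => (Y10 ω + S1 ω * D1 ω) - (Y00 ω + S0 ω * D0 ω)) = 0 := by
    rw [hZeq]; exact hkey
  rw [h0, zero_div]
end
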